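/- Fix an integer d ≥ 3 and set λ := (d − 2)/2. Define h : ℕ → ℝ by h(1) := 1/4, h(2m) := m · ((2m − 3)‼)² / π for every m ≥ 1 (natural-number subtraction, so (2·1 − 3)‼ = 0‼ = 1), and h(k) := 0 for all other k. For ℓ ∈ ℕ define β_ℓ := λ · Σ'_{m ∈ ℕ} h(ℓ + 2m) / ( 2^{ℓ+2m} · m! · (λ)_{ℓ+m+1} ), where (a)_n denotes the Pochhammer symbol a(a+1)⋯(a+n−1). Then β_1 = 1/(4d) and β_0 < β_1. -/

import Mathlib

/-! `β₁` has a single nonzero term, `λ h(1) / (2 (λ)₂) = 1/(8(λ+1)) = 1/(4d)`.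
In `β₀` the `m`-th term (`m ≥ 1`) is at most `3 / (4π λ(λ+1) (2m-1)(2m+1))`: write
`(λ)_{m+1} = λ(λ+1)(λ+2)_{m-1}`, bound `(λ+2)_{m-1} ≥ (5/2)_{m-1} = (2m+1)‼ / (3·2^{m-1})` and
`(2m-3)‼ ≤ 2^{m-1}(m-1)!` (the bound is attained at `m = 1`). These majorants telescope to
`3/(8πλ(λ+1))`, so `β₀ ≤ 3/(4πd) = (3/π) β₁ < β₁`. -/

/-- The sequence of iterated derivatives at `0` of `h(u) = u(π - arccos u)/(2π)`:
`h 1 = 1/4`, `h (2m) = m ((2m-3)‼)²/π` for `m ≥ 1`, and `h k = 0` otherwise. -/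
noncomputable def hDeriv (k : ℕ) : ℝ :=
  if k = 1 then 1 / 4
  else if 2 ∣ k ∧ k ≠ 0 then
    ((k / 2 : ℕ) : ℝ) * ((Nat.doubleFactorial (k - 3) : ℝ)) ^ 2 / Real.pi
  else 0

/-- The NTK spherical-harmonics coefficients
`β_ℓ = λ ∑' m, h(ℓ+2m) / (2^{ℓ+2m} m! (λ)_{ℓ+m+1})` with `λ = (d-2)/2`. -/
noncomputable def betaCoef (d : ℕ) (ℓ : ℕ) : ℝ :=
  (((d : ℝ) - 2) / 2) *
    ∑' m : ℕ, hDeriv (ℓ + 2 * m) /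
      (2 ^ (ℓ + 2 * m) * (Nat.factorial m : ℝ) *
        Polynomial.eval (((d : ℝ) - 2) / 2) (ascPochhammer ℝ (ℓ + m + 1)))

open Polynomial Nat Real

lemma hDeriv_nonneg (k : ℕ) : 0 ≤ hDeriv k := by
  unfold hDeriv
  split_ifs <;> positivity

lemma hDeriv_zero : hDeriv 0 = 0 := by
  simp [hDeriv]

lemma hDeriv_one : hDeriv 1 = 1 / 4 := by
  simp [hDeriv]

lemma hDeriv_one_add_two_mul {m : ℕ} (hm : m ≠ 0) : hDeriv (1 + 2 * m) = 0 := by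
  rw [hDeriv, if_neg (by omega), if_neg (by omega)]

lemma hDeriv_two_mul_succ (j : ℕ) :
    hDeriv (2 * (j + 1)) = (j + 1) * ((2 * j - 1)‼ : ℝ) ^ 2 / π := by
  rw [hDeriv, if_neg (by omega), if_pos ⟨dvd_mul_right 2 _, by omega⟩,
    Nat.mul_div_cancel_left _ two_pos, show 2 * (j + 1) - 3 = 2 * j - 1 by omega]
  push_cast
  rfl

lemma ascPochhammer_eval_add_two (n : ℕ) (x : ℝ) :
    (ascPochhammer ℝ (n + 2)).eval x = x * (x + 1) * (ascPochhammer ℝ n).eval (x + 2) := by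
  rw [add_comm, ← ascPochhammer_mul, eval_mul, eval_comp]
  simp [ascPochhammer_succ_eval]

lemma doubleFactorial_two_mul_sub_one_le : ∀ j : ℕ, (2 * j - 1)‼ ≤ 2 ^ j * j !
  | 0 => le_rfl
  | j + 1 => by
    rw [show 2 * (j + 1) - 1 = 2 * j + 1 by omega, doubleFactorial_add_one, pow_succ,
      factorial_succ, show 2 ^ j * 2 * ((j + 1) * j !) = 2 * (j + 1) * (2 ^ j * j !) by ring]
    exact Nat.mul_le_mul (by omega) (doubleFactorial_two_mul_sub_one_le j)

-- `3 · 2ʲ (5/2)_j = (2j+3)‼`, and the Pochhammer symbol is monotone.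
lemma doubleFactorial_le_ascPochhammer_eval {x : ℝ} (hx : 5 / 2 ≤ x) :
    ∀ j : ℕ, ((2 * j + 3)‼ : ℝ) ≤ 3 * 2 ^ j * (ascPochhammer ℝ j).eval x
  | 0 => by norm_num [Nat.doubleFactorial]
  | j + 1 => by
    rw [show 2 * (j + 1) + 3 = 2 * j + 3 + 2 by ring, doubleFactorial_add_two,
      ascPochhammer_succ_eval, pow_succ]
    push_cast
    have ih := doubleFactorial_le_ascPochhammer_eval hx j
    calc (2 * j + 3 + 2 : ℝ) * (2 * j + 3)‼
        ≤ 2 * (x + j) * (3 * 2 ^ j * (ascPochhammer ℝ j).eval x) := by gcongr; linarith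
      _ = _ := by ring

lemma hDeriv_two_mul_succ_div_le {x : ℝ} (hx : 1 / 2 ≤ x) (j : ℕ) :
    hDeriv (2 * (j + 1)) /
        (2 ^ (2 * (j + 1)) * ((j + 1)! : ℝ) * (ascPochhammer ℝ (j + 1 + 1)).eval x)
      ≤ 3 / (4 * π * (x * (x + 1)) * ((2 * j + 1) * (2 * j + 3))) := by
  set D : ℝ := (((2 * j - 1)‼ : ℕ) : ℝ)
  set P := (ascPochhammer ℝ j).eval (x + 2)
  have hD : D ≤ 2 ^ j * (j ! : ℝ) := by
    simp only [D]
    exact_mod_cast doubleFactorial_two_mul_sub_one_le j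
  have hP : (2 * j + 1) * (2 * j + 3) * D ≤ 3 * 2 ^ j * P := by
    have h := doubleFactorial_le_ascPochhammer_eval (x := x + 2) (by linarith) j
    rw [show 2 * j + 3 = 2 * j + 1 + 2 by ring, doubleFactorial_add_two,
      doubleFactorial_add_one] at h
    push_cast at h
    linarith
  have hD0 : 0 ≤ D := by positivity
  have hP0 : 0 < P := ascPochhammer_pos _ _ (by linarith)
  rw [hDeriv_two_mul_succ, ascPochhammer_eval_add_two, factorial_succ, div_div,
    div_le_div_iff₀ (by positivity) (by positivity)]
  push_cast
  calc (j + 1) * D ^ 2 * (4 * π * (x * (x + 1)) * ((2 * j + 1) * (2 * j + 3)))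
      = 4 * π * (x * (x + 1)) * (j + 1) * D * ((2 * j + 1) * (2 * j + 3) * D) := by ring
    _ ≤ 4 * π * (x * (x + 1)) * (j + 1) * (2 ^ j * j !) * (3 * 2 ^ j * P) := by
      gcongr
    _ = 3 * (π * (2 ^ (2 * (j + 1)) * ((j + 1) * j !) * (x * (x + 1) * P))) := by ring

lemma sum_range_le_of_le_sub_succ {f a : ℕ → ℝ} (ha : ∀ n, 0 ≤ a n)
    (h : ∀ n, f n ≤ a n - a (n + 1)) (n : ℕ) : ∑ i ∈ Finset.range n, f i ≤ a 0 :=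
  calc ∑ i ∈ Finset.range n, f i ≤ ∑ i ∈ Finset.range n, (a i - a (i + 1)) :=
        Finset.sum_le_sum fun i _ => h i
    _ = a 0 - a n := Finset.sum_range_sub' a n
    _ ≤ a 0 := sub_le_self _ (ha n)

lemma betaCoef_one {d : ℕ} (hd : d ≠ 2) : betaCoef d 1 = 1 / (4 * (d : ℝ)) := by
  have hl : ((d : ℝ) - 2) / 2 ≠ 0 := by
    have : (d : ℝ) ≠ 2 := by exact_mod_cast hd
    contrapose! this
    linarith
  rw [betaCoef, tsum_eq_single 0 fun m hm => by rw [hDeriv_one_add_two_mul hm, zero_div]]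
  simp only [mul_zero, add_zero, hDeriv_one, factorial_zero, Nat.cast_one, mul_one, pow_one,
    ascPochhammer_succ_eval, ascPochhammer_one, eval_X]
  rw [mul_left_comm 2, ← mul_div_assoc, mul_div_mul_left _ _ hl]
  ring

lemma betaCoef_zero_le {d : ℕ} (hd : 3 ≤ d) : betaCoef d 0 ≤ 3 / (4 * π * d) := by
  set x : ℝ := ((d : ℝ) - 2) / 2 with hx_def
  have hd_eq : (d : ℝ) = 2 * (x + 1) := by rw [hx_def]; ring
  have hx : 1 / 2 ≤ x := by
    have : (3 : ℝ) ≤ d := by exact_mod_cast hd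
    linarith
  set g : ℕ → ℝ := fun m =>
    hDeriv (2 * m) / (2 ^ (2 * m) * (m ! : ℝ) * (ascPochhammer ℝ (m + 1)).eval x)
  have hβ : betaCoef d 0 = x * ∑' m, g m := by simp only [betaCoef, zero_add, g, x]
  have hg : ∀ m, 0 ≤ g m := fun m =>
    div_nonneg (hDeriv_nonneg _) (by have := ascPochhammer_pos (m + 1) x (by linarith); positivity)
  set a : ℕ → ℝ := fun j => 3 / (8 * π * (x * (x + 1)) * (2 * j + 1))
  have ha : ∀ j, 0 ≤ a j := fun j => by positivity
  have hga : ∀ j, g (j + 1) ≤ a j - a (j + 1) := fun j =>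
    (hDeriv_two_mul_succ_div_le hx j).trans_eq (by simp only [a]; push_cast; field_simp; ring)
  have hpartial := sum_range_le_of_le_sub_succ ha hga
  have hsum := summable_of_sum_range_le (fun j => hg (j + 1)) hpartial
  have htsum := Real.tsum_le_of_sum_range_le (fun j => hg (j + 1)) hpartial
  rw [hβ, tsum_eq_zero_add' hsum]
  simp only [g, mul_zero, hDeriv_zero, zero_div, zero_add]
  have hx0 : 0 < x := by linarith
  calc x * ∑' j, g (j + 1) ≤ x * a 0 := mul_le_mul_of_nonneg_left htsum hx0.le
    _ = 3 / (4 * π * d) := by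
      rw [hd_eq]
      simp only [a]
      field_simp
      ring

/-- For `d ≥ 3`, the NTK eigenvalue coefficients satisfy `β_1 = 1/(4d)` and
`β_0 < β_1`. -/
theorem betaCoef_one_eq_and_zero_lt_one (d : ℕ) (hd : 3 ≤ d) :
    betaCoef d 1 = 1 / (4 * (d : ℝ)) ∧ betaCoef d 0 < betaCoef d 1 := by
  have hβ₁ := betaCoef_one (show d ≠ 2 by omega)
  refine ⟨hβ₁, ?_⟩
  have hd0 : (0 : ℝ) < d := by exact_mod_cast (show 0 < d by omega)
  calc betaCoef d 0 ≤ 3 / (4 * π * d) := betaCoef_zero_le hd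
    _ < 1 / (4 * d) := by
      rw [div_lt_div_iff₀ (by positivity) (by positivity)]
      nlinarith [pi_gt_three]
    _ = betaCoef d 1 := hβ₁.symm
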